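/- (Corrected De Concini–Procesi identity.) Suppose χ_0, χ_1, …, χ_k ∈ ℤ^d (k ≥ 1) are nonzero and χ_0 = ∑_{i=1}^k χ_i. Then ω_1 ∧ ⋯ ∧ ω_k = ∑_{I ⊊ {1,…,k}} (−1)^{|I| + k + 1 + ℓ(I, {1,…,k}∖I)} ω_I ∧ ψ_{B(I ∪ {0})} ∧ ω_0, where: for A ⊆ {0,…,k}, i(A) := max({0,…,k}∖A) and B(A) := ({0,…,k}∖A)∖{i(A)}; ℓ(I,J) := #{(a,b) ∈ I × J : a > b}; and ω_I (resp. ψ_{B(I∪{0})}) denotes the wedge product of the ω_i over i ∈ I (resp. of the ψ_i over i ∈ B(I∪{0})) in increasing order of i. -/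

import Mathlib

open scoped BigOperators

noncomputable section

set_option synthInstance.maxHeartbeats 1000000
set_option maxHeartbeats 1000000

/-- The field of rational functions in `d` variables over `ℚ`. -/
abbrev KK (d : ℕ) : Type := FractionRing (MvPolynomial (Fin d) ℚ)

/-- The module of Kähler differentials of `K` over `ℚ`. -/
abbrev ΩK (d : ℕ) : Type := KaehlerDifferential ℚ (KK d)

/-- The Laurent monomial `x^χ` associated with a character `χ ∈ ℤ^d`. -/
def xpow (d : ℕ) (χ : Fin d → ℤ) : KK d :=
  ∏ j : Fin d, (algebraMap (MvPolynomial (Fin d) ℚ) (KK d) (MvPolynomial.X j)) ^ (χ j)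

/-- The 1-form `ψ_χ = (x^χ)⁻¹ • D(x^χ)`, i.e. `dlog(x^χ)`. -/
def psiF (d : ℕ) (χ : Fin d → ℤ) : ΩK d :=
  (xpow d χ)⁻¹ • (KaehlerDifferential.D ℚ (KK d)) (xpow d χ)

/-- The 1-form `ω_χ = (1 - x^χ)⁻¹ • D(1 - x^χ)`, i.e. `dlog(1 - x^χ)`. -/
def omegaF (d : ℕ) (χ : Fin d → ℤ) : ΩK d :=
  (1 - xpow d χ)⁻¹ • (KaehlerDifferential.D ℚ (KK d)) (1 - xpow d χ)

/-- The 1-form `ω̄_χ = 2ω_χ - ψ_χ`. -/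
def obarF (d : ℕ) (χ : Fin d → ℤ) : ΩK d := 2 • omegaF d χ - psiF d χ

/-- The exterior algebra of the module of Kähler differentials over `K`. -/
abbrev ExtK (d : ℕ) := ExteriorAlgebra (KK d) (ΩK d)

/-- Inclusion of a 1-form into the exterior algebra. -/
def wdg (d : ℕ) (v : ΩK d) : ExtK d := ExteriorAlgebra.ι (KK d) v

/-- Ordered (wedge) product of elements indexed by a finite set of naturals,
taken in increasing order of the index. -/
def oprod (d : ℕ) (A : Finset ℕ) (f : ℕ → ExtK d) : ExtK d :=
  ((A.sort (· ≤ ·)).map f).prod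

/- ### Auxiliary generic lemmas about exterior algebras -/

section Generic
open ExteriorAlgebra
variable {R : Type*} {M : Type*} [CommRing R] [AddCommGroup M] [Module R M]
local notation "ιι" => ExteriorAlgebra.ι R

theorem iota_swap (v w : M) : ιι v * ιι w = -(ιι w * ιι v) :=
  eq_neg_of_add_eq_zero_left (ExteriorAlgebra.ι_add_mul_swap v w)

/-- moving ι v across a product of ι's -/
theorem prod_mul_iota (l : List M) (v : M) :
    (l.map ιι).prod * ιι v = ((-1 : R) ^ l.length) • (ιι v * (l.map ιι).prod) := by
  induction l with
  | nil => simp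
  | cons a t ih =>
    simp only [List.map_cons, List.prod_cons, List.length_cons, mul_assoc, ih]
    rw [mul_smul_comm, ← mul_assoc, iota_swap a v, pow_succ]
    simp [mul_smul, neg_mul, mul_assoc]

theorem prod_dup_zero (l : List M) (v : M) (hv : v ∈ l) :
    (l.map ιι).prod * ιι v = 0 := by
  obtain ⟨s, t, rfl⟩ := List.mem_iff_append.mp hv
  rw [List.map_append, List.prod_append, List.map_cons, List.prod_cons,
    mul_assoc, mul_assoc, prod_mul_iota t v, mul_smul_comm, mul_smul_comm,
    ← mul_assoc (ιι v), ι_sq_zero]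
  simp

theorem prod_orderedInsert (g : ℕ → M) (b : ℕ) (l : List ℕ)
    (hs : l.Pairwise (· ≤ ·)) (hb : b ∉ l) :
    (((l.orderedInsert (· ≤ ·) b).map (fun i => ιι (g i))).prod) =
      ((-1 : R) ^ (l.filter (fun a => b < a)).length) •
        ((l.map (fun i => ιι (g i))).prod * ιι (g b)) := by
  induction l with
  | nil => simp
  | cons a t ih =>
    by_cases hba : b ≤ a
    · have hlt : ∀ x ∈ a :: t, b < x := by
        intro x hx
        rcases List.mem_cons.mp hx with rfl | hx
        · exact lt_of_le_of_ne hba (by rintro rfl; exact hb List.mem_cons_self)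
        · have : a ≤ x := (List.pairwise_cons.mp hs).1 x hx
          exact lt_of_le_of_ne (hba.trans this)
            (by rintro rfl; exact hb (List.mem_cons_of_mem _ hx))
      rw [List.orderedInsert]
      simp only [decide_eq_true_eq, hba, if_true]
      have hfilt : (a :: t).filter (fun x => decide (b < x)) = a :: t := by
        rw [List.filter_eq_self]; intro x hx; simpa using hlt x hx
      rw [hfilt]
      have := prod_mul_iota (R := R) ((a :: t).map g) (g b)
      rw [List.map_map] at this
      rw [show ((a :: t).map fun i => ιι (g i)) = (a::t).map (ιι ∘ g) from rfl, this]
      rw [List.length_map, smul_smul, ← mul_pow, neg_mul_neg, one_mul, one_pow, one_smul]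
      simp [List.prod_cons, Function.comp_def]
    · push_neg at hba
      rw [List.orderedInsert]
      simp only [decide_eq_true_eq, not_le.mpr hba, if_false]
      have ht : t.Pairwise (· ≤ ·) := (List.pairwise_cons.mp hs).2
      have hbt : b ∉ t := fun h => hb (List.mem_cons_of_mem _ h)
      simp only [List.map_cons, List.prod_cons, ih ht hbt]
      have : (a :: t).filter (fun x => decide (b < x)) = t.filter (fun x => decide (b < x)) := by
        rw [List.filter_cons]
        simp [not_lt.mpr hba.le]
      rw [this, mul_smul_comm, mul_assoc]

/-- wedge product over a finset in increasing index order -/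
def fprod (A : Finset ℕ) (g : ℕ → M) : ExteriorAlgebra R M :=
  ((A.sort (· ≤ ·)).map (fun i => ιι (g i))).prod

theorem sort_insert_eq (b : ℕ) (I : Finset ℕ) (hb : b ∉ I) :
    (insert b I).sort (· ≤ ·) = (I.sort (· ≤ ·)).orderedInsert (· ≤ ·) b := by
  have hs2 : List.Pairwise (· ≤ ·) ((I.sort (· ≤ ·)).orderedInsert (· ≤ ·) b) :=
    List.Pairwise.orderedInsert (r := fun x1 x2 => x1 ≤ x2) b _ (Finset.pairwise_sort _ _)
  refine List.Perm.eq_of_pairwise' (Finset.pairwise_sort _ _) hs2 ?_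
  refine List.Perm.trans ?_ (List.perm_orderedInsert (· ≤ ·) b _).symm
  have h1 : ((insert b I).sort (· ≤ ·) : Multiset ℕ) = (insert b I).val := Finset.sort_eq _ _
  have h2 : ((b :: I.sort (· ≤ ·) : List ℕ) : Multiset ℕ) = (insert b I).val := by
    rw [Finset.insert_val_of_notMem hb, ← Finset.sort_eq I (· ≤ ·)]
    rfl
  exact Quotient.exact (h1.trans h2.symm)

theorem filter_sort_length (I : Finset ℕ) (p : ℕ → Prop) [DecidablePred p] :
    ((I.sort (· ≤ ·)).filter (fun a => decide (p a))).length = (I.filter p).card := by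
  have : (((I.sort (· ≤ ·)).filter (fun a => decide (p a)) : List ℕ) : Multiset ℕ)
      = Multiset.filter p I.val := by
    rw [← Finset.sort_eq I (· ≤ ·)]
    rfl
  rw [Finset.card, Finset.filter_val, ← this]
  rfl

theorem fprod_insert (g : ℕ → M) (b : ℕ) (I : Finset ℕ) (hb : b ∉ I) :
    fprod (insert b I) g =
      ((-1 : R) ^ (I.filter (fun a => b < a)).card) • (fprod I g * ιι (g b)) := by
  rw [fprod, sort_insert_eq b I hb,
    prod_orderedInsert g b _ (Finset.pairwise_sort _ _) (by simp [Finset.mem_sort, hb])]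
  rw [show ((Finset.sort I (· ≤ ·)).filter (fun a => decide (b < a))).length
      = (I.filter (fun a => b < a)).card from filter_sort_length I (fun a => b < a)]
  rfl

theorem fprod_dup (g : ℕ → M) (j : ℕ) (A : Finset ℕ) (hj : j ∈ A) :
    fprod A g * ιι (g j) = 0 := by
  have : (A.sort (· ≤ ·)).map (fun i => ιι (g i)) = ((A.sort (· ≤ ·)).map g).map ιι := by
    simp [List.map_map, Function.comp_def]
  rw [fprod, this, prod_dup_zero]
  exact List.mem_map_of_mem (f := g) (by simpa [Finset.mem_sort] using hj)

theorem fprod_union (g : ℕ → M) (I J : Finset ℕ) (hd : Disjoint I J) :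
    (fprod I g * fprod J g : ExteriorAlgebra R M) =
      ((-1 : R) ^ (∑ b ∈ J, (I.filter (fun a => b < a)).card)) • fprod (I ∪ J) g := by
  induction J using Finset.induction_on_min generalizing I with
  | empty => simp [fprod]
  | insert b J hmin ih =>
    have hbJ : b ∉ J := fun h => lt_irrefl b (hmin b h)
    have hbI : b ∉ I := fun h => (Finset.disjoint_left.mp hd) h (Finset.mem_insert_self b J)
    have hsort : (insert b J).sort (· ≤ ·) = b :: J.sort (· ≤ ·) :=
      Finset.sort_insert _ (fun x hx => (hmin x hx).le) hbJ
    have hJs : fprod (insert b J) g = ιι (g b) * fprod J g := by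
      rw [fprod, hsort]; simp [fprod]
    rw [hJs, ← mul_assoc]
    have h1 : fprod I g * ιι (g b) =
        ((-1 : R) ^ (I.filter (fun a => b < a)).card) • fprod (insert b I) g := by
      rw [fprod_insert g b I hbI, smul_smul, ← mul_pow]; norm_num
    have hdis : Disjoint (insert b I) J := by
      rw [Finset.disjoint_left]
      rintro x hx hxJ
      rcases Finset.mem_insert.mp hx with rfl | hx
      · exact hbJ hxJ
      · exact (Finset.disjoint_left.mp hd) hx (Finset.mem_insert_of_mem hxJ)
    rw [h1, smul_mul_assoc, ih _ hdis]
    have hexp : ∀ b' ∈ J, (insert b I).filter (fun a => b' < a) = I.filter (fun a => b' < a) := by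
      intro b' hb'
      rw [Finset.filter_insert, if_neg (not_lt.mpr (hmin b' hb').le)]
    rw [Finset.sum_congr rfl (fun b' hb' => by rw [hexp b' hb'])]
    rw [smul_smul, ← pow_add, Finset.sum_insert hbJ, Finset.insert_union,
      ← Finset.union_insert]


theorem fprod_congr (g₁ g₂ : ℕ → M) (A : Finset ℕ) (h : ∀ i ∈ A, g₁ i = g₂ i) :
    (fprod A g₁ : ExteriorAlgebra R M) = fprod A g₂ := by
  rw [fprod, fprod]
  congr 1
  exact List.map_congr_left fun i hi => by rw [h i ((Finset.mem_sort _).mp hi)]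

theorem list_smul_prod (c : ℕ → R) (g : ℕ → M) (l : List ℕ) :
    (l.map (fun i => ιι (c i • g i))).prod
      = (l.map c).prod • (l.map (fun i => ιι (g i))).prod := by
  induction l with
  | nil => simp
  | cons a t ih =>
    simp only [List.map_cons, List.prod_cons, ih]
    rw [map_smul, smul_mul_assoc, mul_smul_comm, smul_smul]

theorem fprod_smul (c : ℕ → R) (g : ℕ → M) (A : Finset ℕ) :
    (fprod A (fun i => c i • g i) : ExteriorAlgebra R M) = (∏ i ∈ A, c i) • fprod A g := by
  rw [fprod, fprod, list_smul_prod]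
  congr 1
  rw [Finset.prod, ← Finset.sort_eq A (· ≤ ·)]
  rfl

end Generic

theorem phiX_ne_zero (d : ℕ) (j : Fin d) :
    algebraMap (MvPolynomial (Fin d) ℚ) (KK d) (MvPolynomial.X j) ≠ 0 := by
  intro h
  exact MvPolynomial.X_ne_zero j (IsFractionRing.injective (MvPolynomial (Fin d) ℚ) (KK d)
    (by simpa using h))

theorem xpow_ne_zero (d : ℕ) (χ : Fin d → ℤ) : xpow d χ ≠ 0 := by
  rw [xpow]
  exact Finset.prod_ne_zero_iff.mpr fun j _ => zpow_ne_zero _ (phiX_ne_zero d j)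

theorem xpow_zero_eq (d : ℕ) : xpow d (0 : Fin d → ℤ) = 1 := by
  simp [xpow]

theorem xpow_add (d : ℕ) (χ₁ χ₂ : Fin d → ℤ) :
    xpow d (χ₁ + χ₂) = xpow d χ₁ * xpow d χ₂ := by
  rw [xpow, xpow, xpow, ← Finset.prod_mul_distrib]
  exact Finset.prod_congr rfl fun j _ => zpow_add₀ (phiX_ne_zero d j) _ _

theorem xpow_sum (d : ℕ) (s : Finset ℕ) (χ : ℕ → Fin d → ℤ) :
    xpow d (∑ i ∈ s, χ i) = ∏ i ∈ s, xpow d (χ i) := by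
  induction s using Finset.induction_on with
  | empty => simpa using xpow_zero_eq d
  | insert _ _ h ih => rw [Finset.sum_insert h, xpow_add, ih, Finset.prod_insert h]

theorem xpow_ne_one (d : ℕ) (χ : Fin d → ℤ) (hχ : χ ≠ 0) : xpow d χ ≠ 1 := by
  intro h
  set φ := algebraMap (MvPolynomial (Fin d) ℚ) (KK d) with hφ
  set a : Fin d → ℕ := fun j => (χ j).toNat with ha
  set b : Fin d → ℕ := fun j => (-(χ j)).toNat with hb
  have hsplit : ∀ j : Fin d, (φ (MvPolynomial.X j)) ^ (χ j)
      = (φ (MvPolynomial.X j)) ^ (a j) / (φ (MvPolynomial.X j)) ^ (b j) := by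
    intro j
    have : (χ j) = (a j : ℤ) - (b j : ℤ) := by simp only [ha, hb]; omega
    rw [this, zpow_sub₀ (phiX_ne_zero d j), zpow_natCast, zpow_natCast]
  have hprod : φ (∏ j : Fin d, MvPolynomial.X j ^ (a j)) =
      φ (∏ j : Fin d, MvPolynomial.X j ^ (b j)) := by
    rw [map_prod, map_prod]
    simp only [map_pow]
    have hb0 : ∀ j ∈ Finset.univ, (φ (MvPolynomial.X j)) ^ (b j) ≠ 0 :=
      fun j _ => pow_ne_zero _ (phiX_ne_zero d j)
    rw [← div_eq_one_iff_eq (Finset.prod_ne_zero_iff.mpr hb0), ← Finset.prod_div_distrib]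
    rw [xpow] at h
    rw [← h]
    exact Finset.prod_congr rfl fun j _ => (hsplit j).symm
  have hpoly : (∏ j : Fin d, MvPolynomial.X j ^ (a j) : MvPolynomial (Fin d) ℚ)
      = ∏ j : Fin d, MvPolynomial.X j ^ (b j) :=
    IsFractionRing.injective (MvPolynomial (Fin d) ℚ) (KK d) hprod
  have hmono : ∀ (c : Fin d → ℕ), (∏ j : Fin d, MvPolynomial.X j ^ (c j) : MvPolynomial (Fin d) ℚ)
      = MvPolynomial.monomial (Finsupp.equivFunOnFinite.symm c) 1 := by
    intro c
    rw [← MvPolynomial.prod_X_pow_eq_monomial]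
    refine (Finset.prod_subset (Finset.subset_univ _) ?_).symm
    intro j _ hj
    have hcj : c j = 0 := by
      simpa using Finsupp.notMem_support_iff.mp hj
    rw [hcj, pow_zero]
  rw [hmono a, hmono b] at hpoly
  rcases (MvPolynomial.monomial_eq_monomial_iff _ _ _ _).mp hpoly with ⟨hst, -⟩ | ⟨h1, -⟩
  · apply hχ
    funext j
    have hj : (χ j).toNat = (-(χ j)).toNat := by
      have := congrArg (fun s => Finsupp.equivFunOnFinite s j) hst
      simpa [ha, hb] using this
    show χ j = 0
    omega
  · exact one_ne_zero h1

theorem psiF_zero (d : ℕ) : psiF d (0 : Fin d → ℤ) = 0 := by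
  simp [psiF, xpow_zero_eq]

theorem dlog_mul (d : ℕ) (u v : KK d) (hu : u ≠ 0) (hv : v ≠ 0) :
    ((u * v)⁻¹ • (KaehlerDifferential.D ℚ (KK d)) (u * v) : ΩK d) =
      u⁻¹ • (KaehlerDifferential.D ℚ (KK d)) u + v⁻¹ • (KaehlerDifferential.D ℚ (KK d)) v := by
  have e1 : (u * v)⁻¹ * u = v⁻¹ := by
    rw [mul_inv, mul_comm u⁻¹, mul_assoc, inv_mul_cancel₀ hu, mul_one]
  have e2 : (u * v)⁻¹ * v = u⁻¹ := by
    rw [mul_inv, mul_assoc, inv_mul_cancel₀ hv, mul_one]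
  rw [Derivation.leibniz, smul_add, smul_smul, smul_smul, e1, e2, add_comm]

theorem psiF_add (d : ℕ) (χ₁ χ₂ : Fin d → ℤ) :
    psiF d (χ₁ + χ₂) = psiF d χ₁ + psiF d χ₂ := by
  rw [psiF, psiF, psiF, xpow_add]
  exact dlog_mul d _ _ (xpow_ne_zero d χ₁) (xpow_ne_zero d χ₂)

theorem psiF_sum (d : ℕ) (s : Finset ℕ) (χ : ℕ → Fin d → ℤ) :
    psiF d (∑ i ∈ s, χ i) = ∑ i ∈ s, psiF d (χ i) := by
  induction s using Finset.induction_on with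
  | empty => simpa using psiF_zero d
  | insert _ _ h ih => rw [Finset.sum_insert h, psiF_add, ih, Finset.sum_insert h]

theorem omegaF_eq (d : ℕ) (χ : Fin d → ℤ) (hχ : χ ≠ 0) :
    omegaF d χ = (xpow d χ * (xpow d χ - 1)⁻¹) • psiF d χ := by
  have h0 : xpow d χ ≠ 0 := xpow_ne_zero d χ
  have h1 : xpow d χ - 1 ≠ 0 := sub_ne_zero.mpr (xpow_ne_one d χ hχ)
  have hD : (KaehlerDifferential.D ℚ (KK d)) (1 - xpow d χ)
      = -(xpow d χ • psiF d χ) := by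
    rw [map_sub, Derivation.map_one_eq_zero, zero_sub, psiF, smul_smul, mul_inv_cancel₀ h0, one_smul]
  rw [omegaF, hD, smul_neg, ← neg_smul, smul_smul]
  congr 1
  rw [show xpow d χ - 1 = -(1 - xpow d χ) by ring, inv_neg]
  ring


theorem prod_neg_eq {F : Type*} [Field F] (t : Finset ℕ) (c : ℕ → F) :
    ∏ i ∈ t, (-c i) = (-1 : F) ^ t.card * ∏ i ∈ t, c i := by
  rw [show (fun i => -c i) = fun i => (-1 : F) * c i by funext i; ring,
    Finset.prod_mul_distrib, Finset.prod_const]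

theorem scalar_id {F : Type*} [Field F] (k : ℕ) (α : ℕ → F)
    (hα1 : ∀ i ∈ Finset.Icc 1 k, α i - 1 ≠ 0) (h0 : α 0 - 1 ≠ 0)
    (hprod : α 0 = ∏ i ∈ Finset.Icc 1 k, α i) :
    ∑ I ∈ (Finset.Icc 1 k).powerset.erase (Finset.Icc 1 k),
      (-1 : F) ^ (I.card + k + 1) * (α 0 * (α 0 - 1)⁻¹ * ∏ i ∈ I, (α i * (α i - 1)⁻¹))
    = ∏ i ∈ Finset.Icc 1 k, (α i * (α i - 1)⁻¹) := by
  set s := Finset.Icc 1 k with hs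
  have hcard : s.card = k := by rw [hs, Nat.card_Icc]; omega
  set c : ℕ → F := fun i => α i * (α i - 1)⁻¹ with hc
  set c0 : F := α 0 * (α 0 - 1)⁻¹ with hc0
  set P : F := ∏ i ∈ s, (α i - 1)⁻¹ with hP
  have hself : s ∈ s.powerset := Finset.mem_powerset_self s
  have hsum := Finset.sum_erase_add s.powerset
      (fun I => (-1 : F) ^ (I.card + k + 1) * (c0 * ∏ i ∈ I, c i)) hself
  have key : ∑ I ∈ s.powerset, (-1 : F) ^ (I.card + k + 1) * (c0 * ∏ i ∈ I, c i)
      = c0 * (-1 : F) ^ (k + 1) * ∏ i ∈ s, (-c i + 1) := by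
    rw [Finset.prod_add, Finset.mul_sum]
    refine Finset.sum_congr rfl (fun I hI => ?_)
    rw [Finset.prod_const_one, mul_one, prod_neg_eq, pow_add, pow_add]
    ring
  have h1c : ∀ i ∈ s, -c i + 1 = -(α i - 1)⁻¹ := by
    intro i hi
    have : -c i + 1 = ((α i - 1) - α i) * (α i - 1)⁻¹ := by
      rw [sub_mul, mul_inv_cancel₀ (hα1 i hi), hc]; ring
    rw [this]; ring
  have hprod1c : ∏ i ∈ s, (-c i + 1) = (-1 : F) ^ k * P := by
    rw [Finset.prod_congr rfl h1c, prod_neg_eq, hcard, hP]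
  have hprodc : ∏ i ∈ s, c i = α 0 * P := by
    rw [hc, Finset.prod_mul_distrib, ← hprod, hP]
  have hfull : (-1 : F) ^ (s.card + k + 1) * (c0 * ∏ i ∈ s, c i) = -(c0 * (α 0 * P)) := by
    rw [hcard, hprodc, Odd.neg_one_pow ⟨k, by ring⟩]
    ring
  have hc0e : c0 * (α 0 - 1) = α 0 := by
    rw [hc0, mul_assoc, inv_mul_cancel₀ h0, mul_one]
  rw [key, hfull, hprod1c] at hsum
  rw [hprodc]
  rw [pow_add, pow_one] at hsum
  have hk2 : (-1 : F) ^ k * (-1 : F) ^ k = 1 := by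
    rw [← mul_pow]; norm_num
  linear_combination hsum - (c0 * P) * hk2 + P * hc0e

theorem oprod_eq_fprod (d : ℕ) (A : Finset ℕ) (g : ℕ → ΩK d) :
    oprod d A (fun i => wdg d (g i)) = fprod A g := rfl

theorem card_lt_product (I J : Finset ℕ) :
    ((I ×ˢ J).filter (fun p => p.2 < p.1)).card
      = ∑ b ∈ J, (I.filter (fun a => b < a)).card := by
  rw [Finset.card_filter, Finset.sum_product, Finset.sum_comm]
  exact Finset.sum_congr rfl fun b _ => (Finset.card_filter _ _).symm

/-- corrected De Concini–Procesi identity, eq. `(eq:dp_corretta)`.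
If `χ_0, …, χ_k ∈ ℤ^d` (k ≥ 1) are nonzero and `χ_0 = ∑_{i=1}^k χ_i`, then
`ω_1 ∧ ⋯ ∧ ω_k = ∑_{I ⊊ [k]} (−1)^{|I|+k+1+ℓ(I,[k]∖I)} ω_I ∧ ψ_{B(I∪{0})} ∧ ω_0`,
where for `A ⊆ {0,…,k}` we set `i(A) = max({0,…,k}∖A)` and
`B(A) = ({0,…,k}∖A)∖{i(A)}`, and `ℓ(I,J) = #{(a,b) ∈ I×J : a > b}`. -/
theorem stmt_9 (d k : ℕ) (hk : 1 ≤ k) (χ : ℕ → Fin d → ℤ)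
    (hne : ∀ i ≤ k, χ i ≠ 0)
    (hsum : χ 0 = ∑ i ∈ Finset.Icc 1 k, χ i) :
    oprod d (Finset.Icc 1 k) (fun i => wdg d (omegaF d (χ i))) =
    ∑ I ∈ (Finset.Icc 1 k).powerset.filter (fun I => I ≠ Finset.Icc 1 k),
      ((-1 : ℤ) ^ (I.card + k + 1 +
          ((I ×ˢ ((Finset.Icc 1 k) \ I)).filter (fun p => p.2 < p.1)).card)) •
        (oprod d I (fun i => wdg d (omegaF d (χ i))) *
         oprod d (((Finset.range (k+1)) \ (insert 0 I)).erase
             (((Finset.range (k+1)) \ (insert 0 I)).sup id))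
           (fun i => wdg d (psiF d (χ i))) *
         wdg d (omegaF d (χ 0))) := by
  classical
  have hχne : ∀ i ∈ Finset.Icc 1 k, χ i ≠ 0 := fun i hi => hne i (Finset.mem_Icc.mp hi).2
  have hχ0 : χ 0 ≠ 0 := hne 0 (by omega)
  set s := Finset.Icc 1 k with hsdef
  set g : ℕ → ΩK d := fun i => psiF d (χ i) with hg
  set c : ℕ → KK d := fun i => xpow d (χ i) * (xpow d (χ i) - 1)⁻¹ with hcdef
  set Ψ : ExtK d := fprod s g with hΨ
  -- LHS
  have hLHS : oprod d s (fun i => wdg d (omegaF d (χ i))) = (∏ i ∈ s, c i) • Ψ := by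
    rw [show (fun i => wdg d (omegaF d (χ i))) = (fun i => wdg d ((fun j => omegaF d (χ j)) i)) from rfl,
      oprod_eq_fprod, fprod_congr _ (fun i => c i • g i) s
        (fun i hi => omegaF_eq d (χ i) (hχne i hi)), fprod_smul]
  rw [hLHS]
  -- index set
  rw [show (s.powerset.filter (fun I => I ≠ s)) = s.powerset.erase s from by
    ext I; simp only [Finset.mem_filter, Finset.mem_erase]; tauto]
  -- decompose ω₀
  have hpsi0 : psiF d (χ 0) = ∑ i ∈ s, g i := by
    rw [hsum, psiF_sum]
  have hω0 : wdg d (omegaF d (χ 0))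
      = (xpow d (χ 0) * (xpow d (χ 0) - 1)⁻¹) •
          ∑ i ∈ s, ExteriorAlgebra.ι (KK d) (g i) := by
    rw [show wdg d (omegaF d (χ 0)) = ExteriorAlgebra.ι (KK d) (omegaF d (χ 0)) from rfl,
      omegaF_eq d (χ 0) hχ0, map_smul, hpsi0, map_sum]
  -- per-term computation
  have hterm : ∀ I ∈ s.powerset.erase s,
      ((-1 : ℤ) ^ (I.card + k + 1 +
          ((I ×ˢ (s \ I)).filter (fun p => p.2 < p.1)).card)) •
        (oprod d I (fun i => wdg d (omegaF d (χ i))) *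
         oprod d (((Finset.range (k+1)) \ (insert 0 I)).erase
             (((Finset.range (k+1)) \ (insert 0 I)).sup id))
           (fun i => wdg d (psiF d (χ i))) *
         wdg d (omegaF d (χ 0)))
      = ((-1 : KK d) ^ (I.card + k + 1) *
          (xpow d (χ 0) * (xpow d (χ 0) - 1)⁻¹ * ∏ i ∈ I, c i)) • Ψ := by
    intro I hI
    obtain ⟨hIne, hIp⟩ := Finset.mem_erase.mp hI
    have hIs : I ⊆ s := Finset.mem_powerset.mp hIp
    have hJne : (s \ I).Nonempty := by
      rw [Finset.sdiff_nonempty]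
      intro hsub
      exact hIne (Finset.Subset.antisymm hIs hsub)
    have hrange : Finset.range (k+1) \ insert 0 I = s \ I := by
      ext x
      simp only [Finset.mem_sdiff, Finset.mem_range, Finset.mem_insert, hsdef,
        Finset.mem_Icc, not_or]
      constructor
      · rintro ⟨h1, h2, h3⟩
        exact ⟨⟨by omega, by omega⟩, h3⟩
      · rintro ⟨⟨h1, h2⟩, h3⟩
        exact ⟨by omega, by omega, h3⟩
    rw [hrange]
    set J := s \ I with hJdef
    set m := J.sup id with hmdef
    have hmm : m = J.max' hJne := by
      rw [Finset.max'_eq_sup' J hJne, Finset.sup'_eq_sup hJne id]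
    have hmJ : m ∈ J := hmm ▸ J.max'_mem hJne
    have hle : ∀ a ∈ J, a ≤ m := fun a ha => hmm ▸ J.le_max' a ha
    have hmS : m ∈ s := (Finset.mem_sdiff.mp hmJ).1
    set B := J.erase m with hBdef
    -- the three factors
    have hF1 : oprod d I (fun i => wdg d (omegaF d (χ i))) = (∏ i ∈ I, c i) • fprod I g := by
      rw [show (fun i => wdg d (omegaF d (χ i))) = (fun i => wdg d ((fun j => omegaF d (χ j)) i)) from rfl,
        oprod_eq_fprod, fprod_congr _ (fun i => c i • g i) I
          (fun i hi => omegaF_eq d (χ i) (hχne i (hIs hi))), fprod_smul]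
    have hF2 : oprod d B (fun i => wdg d (psiF d (χ i))) = fprod B g := rfl
    rw [hF1, hF2, hω0]
    rw [smul_mul_assoc, smul_mul_assoc, mul_smul_comm, Finset.mul_sum]
    -- kill all terms except i = m
    have hdIJ : Disjoint I J := by
      rw [Finset.disjoint_left]
      intro a haI haJ
      exact (Finset.mem_sdiff.mp haJ).2 haI
    have hdIB : Disjoint I B :=
      hdIJ.mono_right (Finset.erase_subset m J)
    have hzero : ∀ i ∈ s, i ≠ m →
        fprod I g * fprod B g * ExteriorAlgebra.ι (KK d) (g i) = 0 := by
      intro i hi him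
      have hiIB : i ∈ I ∪ B := by
        by_cases hiI : i ∈ I
        · exact Finset.mem_union_left _ hiI
        · refine Finset.mem_union_right _ ?_
          rw [hBdef]
          exact Finset.mem_erase.mpr ⟨him, Finset.mem_sdiff.mpr ⟨hi, hiI⟩⟩
      rw [fprod_union g I B hdIB, smul_mul_assoc, fprod_dup g i _ hiIB, smul_zero]
    rw [Finset.sum_eq_single_of_mem m hmS (fun i hi hne' => hzero i hi hne')]
    -- the m term
    have hBm : fprod B g * ExteriorAlgebra.ι (KK d) (g m) = fprod J g := by
      have h1 := fprod_insert (R := KK d) g m B (Finset.notMem_erase m J)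
      rw [Finset.insert_erase hmJ] at h1
      have hfe : B.filter (fun a => m < a) = ∅ :=
        Finset.filter_eq_empty_iff.mpr
          (fun a ha => not_lt.mpr (hle a (Finset.erase_subset m J ha)))
      rw [hfe, Finset.card_empty, pow_zero, one_smul] at h1
      exact h1.symm
    rw [mul_assoc, hBm, fprod_union g I J hdIJ, Finset.union_sdiff_of_subset hIs]
    -- signs
    rw [card_lt_product]
    rw [← Int.cast_smul_eq_zsmul (KK d), smul_smul, smul_smul, smul_smul]
    congr 1
    push_cast
    have he2 : ((-1 : KK d) ^ (∑ b ∈ J, (I.filter (fun a => b < a)).card))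
        * ((-1 : KK d) ^ (∑ b ∈ J, (I.filter (fun a => b < a)).card)) = 1 := by
      rw [← mul_pow]; norm_num
    rw [pow_add]
    linear_combination ((-1 : KK d) ^ (I.card + k + 1) * (∏ i ∈ I, c i)
      * (xpow d (χ 0) * (xpow d (χ 0) - 1)⁻¹)) * he2
  refine Eq.trans ?_ (Finset.sum_congr rfl hterm).symm
  rw [← Finset.sum_smul]
  congr 1
  have hα1 : ∀ i ∈ Finset.Icc 1 k, xpow d (χ i) - 1 ≠ 0 :=
    fun i hi => sub_ne_zero.mpr (xpow_ne_one d (χ i) (hχne i hi))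
  have hα0 : xpow d (χ 0) - 1 ≠ 0 := sub_ne_zero.mpr (xpow_ne_one d (χ 0) hχ0)
  have hprodα : xpow d (χ 0) = ∏ i ∈ Finset.Icc 1 k, xpow d (χ i) := by
    rw [hsum, xpow_sum]
  exact (scalar_id k (fun i => xpow d (χ i)) hα1 hα0 hprodα).symm
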